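/- For an Alexandrov space X of finite height with Kolmogorov (T₀) quotient X₀, the Krull dimension of X, the height of X, the Krull dimension of X₀, and the height of X₀ all coincide. -/

import Mathlib

/-!
In an Alexandrov space every point `x` has a smallest open neighbourhood, the set of its
generizations, so an irreducible set is directed under generization. Finite height lets us pick a
point of an irreducible closed set `S` whose closure is maximal among closures of points of `S`;
directedness makes it a generic point of `S`. Hence irreducible closed sets are exactly point
closures and the Krull dimension equals the height. The point closures of `X` and of its Kolmogorov
quotient correspond under preimage, so the quotient has the same height, and it is again
Alexandrov.
-/

open Order Set Topology SeparationQuotient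

/-- The height of a topological space: the supremum of lengths of strictly
increasing chains of point closures, as an element of `WithBot ℕ∞`. -/
noncomputable def topHeight (X : Type*) [TopologicalSpace X] : WithBot ℕ∞ :=
  Order.krullDim {S : Set X // ∃ x : X, S = closure {x}}

lemma wellFoundedGT_of_krullDim_ne_top {α : Type*} [Preorder α] (h : krullDim α ≠ ⊤) :
    WellFoundedGT α := by
  rw [WellFoundedGT, isWellFounded_iff, RelEmbedding.wellFounded_iff_isEmpty]
  refine ⟨fun f => h (top_le_iff.1 ?_)⟩
  rw [← krullDim_nat]
  exact krullDim_le_of_strictMono f fun _ _ hab => f.map_rel_iff.2 hab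

lemma IsIrreducible.exists_specializes {X : Type*} [TopologicalSpace X] [AlexandrovDiscrete X]
    {S : Set X} (hS : IsIrreducible S) {x y : X} (hx : x ∈ S) (hy : y ∈ S) :
    ∃ z ∈ S, z ⤳ x ∧ z ⤳ y := by
  obtain ⟨z, hzS, hzx, hzy⟩ := hS.2 _ _ isOpen_nhdsKer isOpen_nhdsKer
    ⟨x, hx, subset_nhdsKer (mem_singleton x)⟩ ⟨y, hy, subset_nhdsKer (mem_singleton y)⟩
  exact ⟨z, hzS, mem_nhdsKer_singleton.1 hzx, mem_nhdsKer_singleton.1 hzy⟩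

lemma AlexandrovDiscrete.quasiSober_of_topHeight_ne_top {X : Type*} [TopologicalSpace X]
    [AlexandrovDiscrete X] (h : topHeight X ≠ ⊤) : QuasiSober X := by
  have := wellFoundedGT_of_krullDim_ne_top h
  refine ⟨fun {S} hS hSc => ?_⟩
  obtain ⟨x, hxS, hxmax⟩ := exists_maximalFor_of_wellFoundedGT (· ∈ S)
    (fun x : X => (⟨closure {x}, x, rfl⟩ : {S : Set X // ∃ x : X, S = closure {x}})) hS.1
  refine ⟨x, (closure_minimal (singleton_subset_iff.2 hxS) hSc).antisymm fun y hy => ?_⟩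
  obtain ⟨z, hzS, hzx, hzy⟩ := hS.exists_specializes hxS hy
  have hzx' : closure {z} ⊆ closure {x} :=
    hxmax hzS (specializes_iff_closure_subset.1 hzx)
  exact hzx' (specializes_iff_closure_subset.1 hzy (subset_closure rfl))

lemma topologicalKrullDim_eq_topHeight (X : Type*) [TopologicalSpace X] [QuasiSober X] :
    topologicalKrullDim X = topHeight X :=
  krullDim_eq_of_orderIso
    { toFun := fun c => ⟨c, (QuasiSober.sober c.isIrreducible c.isClosed).imp fun _ h => h.symm⟩
      invFun := fun p => ⟨p.1, p.2.choose_spec ▸ isIrreducible_singleton.closure,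
        p.2.choose_spec ▸ isClosed_closure⟩
      left_inv := fun _ => rfl
      right_inv := fun _ => rfl
      map_rel_iff' := Iff.rfl }

lemma SeparationQuotient.preimage_mk_closure_singleton {X : Type*} [TopologicalSpace X] (x : X) :
    mk ⁻¹' closure {mk x} = closure {x} := by
  rw [← image_singleton, ← image_mk_closure, preimage_image_mk_closed isClosed_closure]

lemma topHeight_separationQuotient (X : Type*) [TopologicalSpace X] :
    topHeight (SeparationQuotient X) = topHeight X :=
  krullDim_eq_of_orderIso
    { toFun := fun p => ⟨mk ⁻¹' p.1, by
        obtain ⟨_, ξ, rfl⟩ := p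
        obtain ⟨x, rfl⟩ := surjective_mk ξ
        exact ⟨x, preimage_mk_closure_singleton x⟩⟩
      invFun := fun q => ⟨mk '' q.1, by
        obtain ⟨_, x, rfl⟩ := q
        exact ⟨mk x, by rw [image_mk_closure, image_singleton]⟩⟩
      left_inv := fun p => Subtype.ext (image_preimage_eq _ surjective_mk)
      right_inv := by
        rintro ⟨_, x, rfl⟩
        exact Subtype.ext (preimage_image_mk_closed isClosed_closure)
      map_rel_iff' := surjective_mk.preimage_subset_preimage_iff }

instance SeparationQuotient.instAlexandrovDiscrete {X : Type*} [TopologicalSpace X]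
    [AlexandrovDiscrete X] : AlexandrovDiscrete (SeparationQuotient X) :=
  Quotient.instAlexandrovDiscrete

/-- For an Alexandrov space `X` of finite height, the Krull dimension of `X`,
the height of `X`, the Krull dimension of the Kolmogorov quotient `X₀`, and
the height of `X₀` all coincide. -/
theorem dims_and_heights_coincide {X : Type*} [TopologicalSpace X]
    [AlexandrovDiscrete X] (hfin : topHeight X ≠ ⊤) :
    topologicalKrullDim X = topHeight X ∧
    topologicalKrullDim X = topologicalKrullDim (SeparationQuotient X) ∧
    topologicalKrullDim X = topHeight (SeparationQuotient X) := by
  have hquot := topHeight_separationQuotient X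
  have := AlexandrovDiscrete.quasiSober_of_topHeight_ne_top hfin
  have := AlexandrovDiscrete.quasiSober_of_topHeight_ne_top (hquot ▸ hfin)
  rw [topologicalKrullDim_eq_topHeight, topologicalKrullDim_eq_topHeight, hquot]
  exact ⟨rfl, rfl, rfl⟩
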